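/- Let G = (V, A, g) be a finite directed graph with gain function g and battery capacity B > 0, and let x, y, z ∈ V. Suppose there is a walk P from x to y whose induced path is monotone with respect to a charge drop schedule C_1, and a walk Q from y to z whose induced path is monotone with respect to a charge drop schedule C_2 with g^{C_2}(Q) ≥ 0 and g^{C_1}(P) + g^{C_2}(Q) ≥ 0. Then there exists a walk W from x to z with α_B(W) = B: starting at x with a full battery, the car can reach z with a full battery. -/

import Mathlib

open Finset

namespace EV

noncomputable section

/-- Charge after traversing `i` arcs of a path with arc gains `g`, battery capacity `B`,
initial charge `b`. -/
def charge (B b : ℝ) (g : ℕ → ℝ) : ℕ → ℝ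
  | 0 => b
  | i + 1 => min (charge B b g i + g i) B

/-- The traversal of the path with `n` arcs is feasible from initial charge `b`. -/
def Feasible (B b : ℝ) (g : ℕ → ℝ) (n : ℕ) : Prop :=
  ∀ i < n, 0 ≤ charge B b g i + g i

open Classical in
/-- Maximum final charge `α_b(P)` for a path `P` with `n` arc gains `g`,
as an extended real (`⊥ = -∞` if the traversal is infeasible). -/
def alpha (B b : ℝ) (g : ℕ → ℝ) (n : ℕ) : EReal :=
  if Feasible B b g n then ((charge B b g n : ℝ) : EReal) else ⊥

/-- Gain of the `i`-th vertex (0-indexed): the sum of the first `i` arc gains. -/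
def vGain (g : ℕ → ℝ) (i : ℕ) : ℝ := ∑ t ∈ Finset.range i, g t

/-- `P` is traversable: `α_B(P) ≥ 0`, i.e. feasible from a full battery. -/
def Traversable (B : ℝ) (g : ℕ → ℝ) (n : ℕ) : Prop := Feasible B B g n

/-- `C` is a charge drop schedule for a path with `n` arcs (vertices `0,…,n`):
no drop at the first vertex, all drops nonnegative. -/
def Schedule (C : ℕ → ℝ) (n : ℕ) : Prop := C 0 = 0 ∧ ∀ i ≤ n, 0 ≤ C i

/-- Gain of vertex `i` with respect to the charge drop schedule `C`. -/
def cGain (g C : ℕ → ℝ) (i : ℕ) : ℝ := vGain g i - ∑ t ∈ Finset.range (i + 1), C t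

/-- `P` (with `n` arcs) is ascending with respect to the schedule `C`. -/
def AscendingC (B : ℝ) (g C : ℕ → ℝ) (n : ℕ) : Prop :=
  Traversable B g n ∧ ∀ i ≤ n, 0 ≤ cGain g C i ∧ cGain g C i ≤ cGain g C n

/-- `P` (with `n` arcs) is descending with respect to the schedule `C`. -/
def DescendingC (B : ℝ) (g C : ℕ → ℝ) (n : ℕ) : Prop :=
  Traversable B g n ∧ ∀ i ≤ n, cGain g C n ≤ cGain g C i ∧ cGain g C i ≤ 0

/-- `P` is monotone with respect to the schedule `C`. -/
def MonotoneC (B : ℝ) (g C : ℕ → ℝ) (n : ℕ) : Prop :=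
  AscendingC B g C n ∨ DescendingC B g C n

/-- Ascending with respect to the zero schedule. -/
def Ascending (B : ℝ) (g : ℕ → ℝ) (n : ℕ) : Prop := AscendingC B g (fun _ => 0) n

/-- Descending with respect to the zero schedule. -/
def Descending (B : ℝ) (g : ℕ → ℝ) (n : ℕ) : Prop := DescendingC B g (fun _ => 0) n

/-- Monotone with respect to the zero schedule. -/
def MonotonePath (B : ℝ) (g : ℕ → ℝ) (n : ℕ) : Prop := Ascending B g n ∨ Descending B g n

/-- The contiguous subpath whose arcs start at arc index `a`. -/
def SubPath (g : ℕ → ℝ) (a : ℕ) : ℕ → ℝ := fun t => g (a + t)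

/-- Restriction of a charge drop schedule to the subpath starting at vertex `a`:
no drop at the subpath's first vertex. -/
def restrict (C : ℕ → ℝ) (a : ℕ) : ℕ → ℝ := fun t => if t = 0 then 0 else C (a + t)

/-- First-arc-bounded with respect to a schedule `C` (no drop at the second vertex,
and all vertex gains lie between the gains of the first two vertices). -/
def FirstArcBoundedC (g C : ℕ → ℝ) (n : ℕ) : Prop :=
  C 1 = 0 ∧
    ((0 ≤ g 0 ∧ ∀ i ≤ n, 0 ≤ cGain g C i ∧ cGain g C i ≤ g 0) ∨
     (g 0 ≤ 0 ∧ ∀ i ≤ n, g 0 ≤ cGain g C i ∧ cGain g C i ≤ 0))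

/-- Last-arc-bounded with respect to a schedule `C` (no drops at the last two vertices,
and all vertex gains lie between the gains of the last two vertices). -/
def LastArcBoundedC (g C : ℕ → ℝ) (n : ℕ) : Prop :=
  C (n - 1) = 0 ∧ C n = 0 ∧
    ((0 ≤ g (n - 1) ∧ ∀ i ≤ n, cGain g C (n - 1) ≤ cGain g C i ∧ cGain g C i ≤ cGain g C n) ∨
     (g (n - 1) < 0 ∧ ∀ i ≤ n, cGain g C n ≤ cGain g C i ∧ cGain g C i ≤ cGain g C (n - 1)))

/-- First-arc-bounded (zero schedule). -/
def FirstArcBounded (g : ℕ → ℝ) (n : ℕ) : Prop := FirstArcBoundedC g (fun _ => 0) n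

/-- Last-arc-bounded (zero schedule). -/
def LastArcBounded (g : ℕ → ℝ) (n : ℕ) : Prop := LastArcBoundedC g (fun _ => 0) n

/-- Arc-bounded: first- or last-arc-bounded. -/
def ArcBounded (g : ℕ → ℝ) (n : ℕ) : Prop := FirstArcBounded g n ∨ LastArcBounded g n

/-- A funnel: arc-bounded and containing no monotone subpath of 2 or 3 consecutive arcs. -/
def Funnel (B : ℝ) (g : ℕ → ℝ) (n : ℕ) : Prop :=
  ArcBounded g n ∧ ∀ a m, (m = 2 ∨ m = 3) → a + m ≤ n → ¬ MonotonePath B (SubPath g a) m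

/-- `j = s̄(i)`: the maximal index `j ≥ i` (among arcs of a path with `n` arcs) such that
the subpath of arcs `i,…,j` is first-arc-bounded. -/
def IsSbar (g : ℕ → ℝ) (n i j : ℕ) : Prop :=
  i ≤ j ∧ j < n ∧ FirstArcBounded (SubPath g i) (j - i + 1) ∧
    ∀ j', i ≤ j' → j' < n → FirstArcBounded (SubPath g i) (j' - i + 1) → j' ≤ j

/-- `j = s̲(i)`: the minimal index `j ≤ i` such that the subpath of arcs `j,…,i`
is last-arc-bounded. -/
def IsSlow (g : ℕ → ℝ) (n i j : ℕ) : Prop :=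
  j ≤ i ∧ i < n ∧ LastArcBounded (SubPath g j) (i - j + 1) ∧
    ∀ j', j' ≤ i → LastArcBounded (SubPath g j') (i - j' + 1) → j ≤ j'

/-- Arc gains of the walk around a cycle with `m` arc gains `g`, starting at vertex `a`. -/
def cyc (g : ℕ → ℝ) (m a : ℕ) : ℕ → ℝ := fun t => g ((a + t) % m)

/-- A walk of length `ℓ` from `x` to `y` in the directed graph with arc relation `A`. -/
def IsWalk {V : Type*} (A : V → V → Prop) (w : ℕ → V) (ℓ : ℕ) (x y : V) : Prop :=
  w 0 = x ∧ w ℓ = y ∧ ∀ t < ℓ, A (w t) (w (t + 1))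

/-- The sequence of arc gains induced by a walk `w` in a graph with gain function `g`. -/
def walkGains {V : Type*} (g : V → V → ℝ) (w : ℕ → V) : ℕ → ℝ :=
  fun t => g (w t) (w (t + 1))

/-! Concatenate the walks. From a full battery the charge after `s` arcs is
`B + g_{v_s} - max_{j ≤ s} g_{v_j}`, and on a monotone path no vertex gain exceeds the final one
by more than `max 0 (-g^{C₁}(P))`; so the car reaches `y` with charge `b ≥ B + min 0 g^{C₁}(P)`.
Starting with `b ≤ B` the charge is the minimum of `b + g_{v_s}` and the full-battery charge.
Along `Q` all vertex gains lie in `[0, g(Q)]`, so the car never runs dry, and it arrives with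
`min (b + g(Q)) B = B` because `g(Q) ≥ g^{C₂}(Q) ≥ -min 0 g^{C₁}(P)`. -/

lemma vGain_zero (g : ℕ → ℝ) : vGain g 0 = 0 := by simp [vGain]

lemma vGain_succ (g : ℕ → ℝ) (i : ℕ) : vGain g (i + 1) = vGain g i + g i :=
  Finset.sum_range_succ g i

section Charge

variable {B b : ℝ} {g : ℕ → ℝ}

lemma charge_le (hb : b ≤ B) : ∀ i, charge B b g i ≤ B
  | 0 => hb
  | _ + 1 => min_le_right _ _

lemma charge_nonneg {n : ℕ} (hB : 0 ≤ B) (hb : 0 ≤ b) (hf : Feasible B b g n) :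
    0 ≤ charge B b g n := by
  cases n with
  | zero => exact hb
  | succ i => exact le_min (hf i i.lt_succ_self) hB

lemma charge_congr {g' : ℕ → ℝ} :
    ∀ {i : ℕ}, (∀ t < i, g t = g' t) → charge B b g i = charge B b g' i
  | 0, _ => rfl
  | i + 1, h => by
    simp only [charge, charge_congr fun t ht => h t (ht.trans i.lt_succ_self), h i i.lt_succ_self]

lemma feasible_congr {g' : ℕ → ℝ} {n : ℕ} (h : ∀ t < n, g t = g' t) :
    Feasible B b g n ↔ Feasible B b g' n := by
  refine forall₂_congr fun i hi => ?_
  rw [charge_congr fun t ht => h t (ht.trans hi), h i hi]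

lemma charge_add (a : ℕ) : ∀ s, charge B b g (a + s) = charge B (charge B b g a) (SubPath g a) s
  | 0 => rfl
  | s + 1 => by
    change min (charge B b g (a + s) + g (a + s)) B = min (charge B _ _ s + g (a + s)) B
    rw [charge_add a s]

lemma feasible_add_iff {a s : ℕ} :
    Feasible B b g (a + s) ↔ Feasible B b g a ∧ Feasible B (charge B b g a) (SubPath g a) s := by
  refine ⟨fun h => ⟨fun i hi => h i (by omega), fun i hi => ?_⟩, fun ⟨ha, hs⟩ i hi => ?_⟩
  · simpa only [SubPath, charge_add] using h (a + i) (by omega)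
  · rcases lt_or_ge i a with hia | hia
    · exact ha i hia
    · obtain ⟨j, rfl⟩ := Nat.exists_eq_add_of_le hia
      simpa only [SubPath, charge_add] using hs j (by omega)

lemma alpha_add_of_feasible {a s : ℕ} (ha : Feasible B b g a) :
    alpha B b g (a + s) = alpha B (charge B b g a) (SubPath g a) s := by
  classical
  rw [alpha, alpha, charge_add]
  exact if_congr (by rw [feasible_add_iff, and_iff_right ha]) rfl rfl

lemma charge_eq_min (hb : b ≤ B) :
    ∀ s, charge B b g s = min (b + vGain g s) (charge B B g s)
  | 0 => by simp [charge, vGain_zero, hb]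
  | s + 1 => by
    rw [charge, charge, charge_eq_min hb s, vGain_succ, ← min_add_add_right, min_assoc, add_assoc]

lemma le_charge_full {c : ℝ} :
    ∀ {s : ℕ}, (∀ j ≤ s, c ≤ B + vGain g s - vGain g j) → c ≤ charge B B g s
  | 0, h => by simpa [charge] using h 0 le_rfl
  | s + 1, h => by
    refine le_min ?_ (by simpa using h (s + 1) le_rfl)
    have : c - g s ≤ charge B B g s :=
      le_charge_full fun j hj => by linarith [h j (by omega), vGain_succ g s]
    linarith

end Charge

section Schedule

variable {B : ℝ} {g C : ℕ → ℝ} {n : ℕ}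

lemma Schedule.vGain_sub_le_cGain_sub (hS : Schedule C n) {i j : ℕ} (hij : i ≤ j) (hj : j ≤ n) :
    vGain g i - vGain g j ≤ cGain g C i - cGain g C j := by
  have : ∑ t ∈ range (i + 1), C t ≤ ∑ t ∈ range (j + 1), C t :=
    sum_le_sum_of_subset_of_nonneg (range_subset_range.2 (by omega))
      fun t ht _ => hS.2 t (by simp at ht; omega)
  simp only [cGain]
  linarith

lemma Schedule.cGain_le_vGain (hS : Schedule C n) {i : ℕ} (hi : i ≤ n) :
    cGain g C i ≤ vGain g i := by
  have h0 : cGain g C 0 = 0 := by simp [cGain, vGain_zero, hS.1]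
  linarith [hS.vGain_sub_le_cGain_sub (g := g) i.zero_le hi, vGain_zero g]

lemma MonotoneC.traversable (hm : MonotoneC B g C n) : Traversable B g n := by
  rcases hm with hm | hm <;> exact hm.1

lemma MonotoneC.min_le_vGain_sub (hS : Schedule C n) (hm : MonotoneC B g C n) {j : ℕ}
    (hj : j ≤ n) : min 0 (cGain g C n) ≤ vGain g n - vGain g j := by
  have := hS.vGain_sub_le_cGain_sub (g := g) hj le_rfl
  rcases hm with ⟨-, h⟩ | ⟨-, h⟩
  · exact min_le_of_left_le (by linarith [(h j hj).2])
  · exact min_le_of_right_le (by linarith [(h j hj).2])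

lemma MonotoneC.cGain_nonneg (hm : MonotoneC B g C n) (hg : 0 ≤ cGain g C n) {i : ℕ}
    (hi : i ≤ n) : 0 ≤ cGain g C i := by
  rcases hm with ⟨-, h⟩ | ⟨-, h⟩
  · exact (h i hi).1
  · exact hg.trans (h i hi).1

lemma MonotoneC.add_min_le_charge (hS : Schedule C n) (hm : MonotoneC B g C n) :
    B + min 0 (cGain g C n) ≤ charge B B g n :=
  le_charge_full fun _ hj => by linarith [hm.min_le_vGain_sub hS hj]

lemma MonotoneC.feasible_of_cGain_nonneg (hS : Schedule C n) (hm : MonotoneC B g C n)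
    (hg : 0 ≤ cGain g C n) {b : ℝ} (hb0 : 0 ≤ b) (hbB : b ≤ B) : Feasible B b g n := by
  intro s hs
  rw [charge_eq_min hbB, ← min_add_add_right]
  refine le_min ?_ (hm.traversable s hs)
  have := hS.cGain_le_vGain (g := g) (Nat.succ_le_of_lt hs)
  linarith [hm.cGain_nonneg hg (Nat.succ_le_of_lt hs), vGain_succ g s]

lemma MonotoneC.charge_eq_of_cGain_nonneg (hS : Schedule C n) (hm : MonotoneC B g C n)
    (hg : 0 ≤ cGain g C n) {b : ℝ} (hbB : b ≤ B) (hb : B ≤ b + cGain g C n) :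
    charge B b g n = B := by
  rw [charge_eq_min hbB]
  refine le_antisymm ((min_le_right _ _).trans (charge_le le_rfl n)) (le_min ?_ ?_)
  · linarith [hS.cGain_le_vGain (g := g) le_rfl]
  · refine le_charge_full fun j hj => ?_
    have := hm.min_le_vGain_sub hS hj
    rw [min_eq_left hg] at this
    linarith

end Schedule

section Walk

variable {V : Type*}

def walkAppend (w₁ : ℕ → V) (ℓ₁ : ℕ) (w₂ : ℕ → V) : ℕ → V :=
  fun t => if t < ℓ₁ then w₁ t else w₂ (t - ℓ₁)

variable {w₁ w₂ : ℕ → V} {ℓ₁ : ℕ}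

lemma walkAppend_of_le (hjoin : w₁ ℓ₁ = w₂ 0) {t : ℕ} (ht : t ≤ ℓ₁) :
    walkAppend w₁ ℓ₁ w₂ t = w₁ t := by
  rcases ht.lt_or_eq with ht | rfl
  · simp [walkAppend, ht]
  · simp [walkAppend, hjoin]

lemma walkAppend_add (s : ℕ) : walkAppend w₁ ℓ₁ w₂ (ℓ₁ + s) = w₂ s := by
  simp [walkAppend]

lemma IsWalk.append {A : V → V → Prop} {ℓ₂ : ℕ} {x y z : V} (h₁ : IsWalk A w₁ ℓ₁ x y)
    (h₂ : IsWalk A w₂ ℓ₂ y z) : IsWalk A (walkAppend w₁ ℓ₁ w₂) (ℓ₁ + ℓ₂) x z := by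
  have hjoin : w₁ ℓ₁ = w₂ 0 := h₁.2.1.trans h₂.1.symm
  refine ⟨(walkAppend_of_le hjoin ℓ₁.zero_le).trans h₁.1, (walkAppend_add ℓ₂).trans h₂.2.1,
    fun t ht => ?_⟩
  rcases lt_or_ge t ℓ₁ with ht₁ | ht₁
  · rw [walkAppend_of_le hjoin ht₁.le, walkAppend_of_le hjoin ht₁]
    exact h₁.2.2 t ht₁
  · obtain ⟨s, rfl⟩ := Nat.exists_eq_add_of_le ht₁
    rw [walkAppend_add, add_assoc, walkAppend_add]
    exact h₂.2.2 s (by omega)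

lemma walkGains_append_of_lt (g : V → V → ℝ) (hjoin : w₁ ℓ₁ = w₂ 0) {t : ℕ} (ht : t < ℓ₁) :
    walkGains g (walkAppend w₁ ℓ₁ w₂) t = walkGains g w₁ t := by
  simp only [walkGains, walkAppend_of_le hjoin ht.le, walkAppend_of_le hjoin ht]

lemma subPath_walkGains_append (g : V → V → ℝ) :
    SubPath (walkGains g (walkAppend w₁ ℓ₁ w₂)) ℓ₁ = walkGains g w₂ := by
  ext s
  simp only [SubPath, walkGains, walkAppend_add, add_assoc]

end Walk

theorem full_to_full_general {V : Type*} (A : V → V → Prop) (g : V → V → ℝ)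
    (B : ℝ) (hB : 0 < B) (x y z : V)
    (wP : ℕ → V) (ℓP : ℕ) (hWP : IsWalk A wP ℓP x y)
    (C₁ : ℕ → ℝ) (hC₁ : Schedule C₁ ℓP)
    (hPmono : MonotoneC B (walkGains g wP) C₁ ℓP)
    (wQ : ℕ → V) (ℓQ : ℕ) (hWQ : IsWalk A wQ ℓQ y z)
    (C₂ : ℕ → ℝ) (hC₂ : Schedule C₂ ℓQ)
    (hQmono : MonotoneC B (walkGains g wQ) C₂ ℓQ)
    (hgQ : 0 ≤ cGain (walkGains g wQ) C₂ ℓQ)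
    (hsum : 0 ≤ cGain (walkGains g wP) C₁ ℓP + cGain (walkGains g wQ) C₂ ℓQ) :
    ∃ w ℓ, IsWalk A w ℓ x z ∧ alpha B B (walkGains g w) ℓ = ((B : ℝ) : EReal) := by
  have hprefix : ∀ t < ℓP, walkGains g (walkAppend wP ℓP wQ) t = walkGains g wP t :=
    fun _ => walkGains_append_of_lt g (hWP.2.1.trans hWQ.1.symm)
  set b := charge B B (walkGains g wP) ℓP
  have hb0 : 0 ≤ b := charge_nonneg hB.le hB.le hPmono.traversable
  have hbB : b ≤ B := charge_le le_rfl ℓP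
  have hbQ : B ≤ b + cGain (walkGains g wQ) C₂ ℓQ := by
    have := hPmono.add_min_le_charge hC₁
    have : -cGain (walkGains g wQ) C₂ ℓQ ≤ min 0 (cGain (walkGains g wP) C₁ ℓP) :=
      le_min (by linarith) (by linarith)
    linarith
  refine ⟨walkAppend wP ℓP wQ, ℓP + ℓQ, hWP.append hWQ, ?_⟩
  rw [alpha_add_of_feasible ((feasible_congr hprefix).2 hPmono.traversable),
    subPath_walkGains_append, charge_congr hprefix, alpha,
    if_pos (hQmono.feasible_of_cGain_nonneg hC₂ hgQ hb0 hbB),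
    hQmono.charge_eq_of_cGain_nonneg hC₂ hgQ hbB hbQ]

/-- In a finite directed graph, if there is a walk `P` from `x` to `y` whose
induced path is monotone with respect to a schedule `C₁`, and a walk `Q` from `y` to `z`
whose induced path is monotone with respect to a schedule `C₂` with `g^{C₂}(Q) ≥ 0` and
`g^{C₁}(P) + g^{C₂}(Q) ≥ 0`, then there is a walk `W` from `x` to `z` with `α_B(W) = B`. -/
theorem full_to_full {V : Type*} [Fintype V] (A : V → V → Prop) (g : V → V → ℝ)
    (B : ℝ) (hB : 0 < B) (x y z : V)
    (wP : ℕ → V) (ℓP : ℕ) (hWP : IsWalk A wP ℓP x y)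
    (C₁ : ℕ → ℝ) (hC₁ : Schedule C₁ ℓP)
    (hPmono : MonotoneC B (walkGains g wP) C₁ ℓP)
    (wQ : ℕ → V) (ℓQ : ℕ) (hWQ : IsWalk A wQ ℓQ y z)
    (C₂ : ℕ → ℝ) (hC₂ : Schedule C₂ ℓQ)
    (hQmono : MonotoneC B (walkGains g wQ) C₂ ℓQ)
    (hgQ : 0 ≤ cGain (walkGains g wQ) C₂ ℓQ)
    (hsum : 0 ≤ cGain (walkGains g wP) C₁ ℓP + cGain (walkGains g wQ) C₂ ℓQ) :
    ∃ w ℓ, IsWalk A w ℓ x z ∧ alpha B B (walkGains g w) ℓ = ((B : ℝ) : EReal) :=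
  full_to_full_general A g B hB x y z wP ℓP hWP C₁ hC₁ hPmono wQ ℓQ hWQ C₂ hC₂ hQmono hgQ hsum

end

end EV
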